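/- arXiv:1508.06587 — 2 statements merged into one kernel-verified Lean document; each statement's English description precedes it below -/
import Mathlib

section
/- Let g ≥ 1 and n = 2g. There is a group isomorphism between the group of ℂ-algebra automorphisms of A_n = AddMonoidAlgebra ℂ (Fin n → ℤ) and the semidirect product (Fin n → ℂˣ) ⋊ GL(n, ℤ), where a matrix A ∈ GL(n,ℤ) acts on c : Fin n → ℂˣ by precomposing the associated character with A⁻¹, i.e., (A • c) i = ∏_j (c j) ^ ((A⁻¹) j i) (so that the character m ↦ ∏_i (c i)^(m i) is sent to m ↦ ∏_i (c i)^((A⁻¹ m) i)). -/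
/-!
If `u * v = 1` in `k[G]`, a sum of an exponent of `u` and one of `v` that is attained in only one
way keeps a nonzero coefficient in `u * v`, so it is `0`. If one of the supports were not a
singleton, `G` having two unique sums would give two distinct such pairs, both summing to `0`,
against uniqueness; so the units of `k[G]` are the monomials `r • Xᵃ`. An automorphism `σ`
therefore sends `Xᵃ` to `χ(a) • X^{f a}`, and multiplicativity makes `f` an endomorphism of `G`
(inverted by the one of `σ⁻¹`) and `χ` a character: `σ` is a monomial change of variables followed
by a translation of the torus. For `G = ℤⁿ` the characters are the points of `(kˣ)ⁿ`, the
automorphisms of `G` are `GL(n, ℤ)`, and conjugating the translation by `c` by the change of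
variables `A` gives the translation by `A • c`.
-/

open Finset

namespace AddMonoidAlgebra

variable {k G : Type*}

theorem exists_eq_single_of_mul_eq_one [Semiring k] [NoZeroDivisors k] [AddZeroClass G]
    [TwoUniqueSums G] {u v : k[G]} (huv : u * v = 1) : ∃ a r, u = single a r := by
  classical
  set A := u.coeff.support
  set B := v.coeff.support
  have sum_eq_zero : ∀ p ∈ A ×ˢ B, UniqueAdd A B p.1 p.2 → p.1 + p.2 = 0 := by
    intro p hp hu
    rw [mem_product, Finsupp.mem_support_iff, Finsupp.mem_support_iff] at hp
    have hcoeff := coeff_mul_add_of_uniqueAdd hu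
    rw [huv, one_def, coeff_single, Finsupp.single_apply] at hcoeff
    by_contra hne
    rw [if_neg (Ne.symm hne)] at hcoeff
    exact mul_ne_zero hp.1 hp.2 hcoeff.symm
  have hcard : #A * #B ≤ 1 := by
    by_contra! h
    obtain ⟨p, hp, q, hq, hpq, hpu, hqu⟩ := TwoUniqueSums.uniqueAdd_of_one_lt_card h
    rw [mem_product] at hq
    obtain ⟨h1, h2⟩ :=
      hpu hq.1 hq.2 (by rw [sum_eq_zero p hp hpu, sum_eq_zero q (mem_product.2 hq) hqu])
    exact hpq (Prod.ext h1 h2).symm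
  obtain hB | hB := Nat.eq_zero_or_pos #B
  · have hv : v = 0 := coeff_injective (by simpa [B] using hB)
    have : Subsingleton k[G] := subsingleton_of_zero_eq_one (by rw [← huv, hv, mul_zero])
    exact ⟨0, 0, Subsingleton.elim _ _⟩
  · obtain ⟨a, ha⟩ := card_le_one_iff_subset_singleton.1 (by nlinarith : #A ≤ 1)
    exact ⟨a, _, coeff_injective (Finsupp.support_subset_singleton.1 ha)⟩

theorem algEquiv_ext [CommSemiring k] [AddMonoid G] {σ τ : k[G] ≃ₐ[k] k[G]}
    (h : ∀ a, σ (single a 1) = τ (single a 1)) : σ = τ :=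
  AlgEquiv.coe_toAlgHom_injective (algHom_ext h (Subsingleton.elim _ _))

section CommSemiring

variable [CommSemiring k] [AddMonoid G]

-- The translation of the torus `Hom(G, kˣ)` by the point `χ`, on its coordinate ring `k[G]`.
noncomputable def twist : (Multiplicative G →* kˣ) →* (k[G] →ₐ[k] k[G]) where
  toFun χ := lift k k[G] G
    { toFun a := single a.toAdd (χ a : k)
      map_one' := by simp [one_def]
      map_mul' a b := by simp [single_mul_single] }
  map_one' := algHom_ext (fun a => by simp) (Subsingleton.elim _ _)
  map_mul' χ ψ := algHom_ext (fun a => by simp [mul_comm]) (Subsingleton.elim _ _)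

@[simp]
theorem twist_single (χ : Multiplicative G →* kˣ) (a : G) (r : k) :
    twist χ (single a r) = single a (r * χ (.ofAdd a)) := by
  simp [twist]

noncomputable def twistAut : (Multiplicative G →* kˣ) →* (k[G] ≃ₐ[k] k[G]) :=
  (AlgEquiv.algHomUnitsEquiv k k[G]).toMonoidHom.comp twist.toHomUnits

@[simp]
theorem twistAut_apply (χ : Multiplicative G →* kˣ) (x : k[G]) : twistAut χ x = twist χ x := rfl

theorem twistAut_comp_symm (χ : Multiplicative G →* kˣ) (e : G ≃+ G) :
    twistAut (χ.comp (e.symm : G →+ G).toMultiplicative) =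
      domCongr k k e * twistAut χ * (domCongr k k e)⁻¹ :=
  algEquiv_ext fun a => by simp [AlgEquiv.aut_inv]

theorem twistAut_mul_domCongr_single (χ : Multiplicative G →* kˣ) (e : G ≃+ G) (a : G) (r : k) :
    (twistAut χ * domCongr k k e) (single a r) = single (e a) (r * χ (.ofAdd (e a))) := by
  simp

theorem eq_one_of_twistAut_mul_domCongr_eq_one [Nontrivial k] {χ : Multiplicative G →* kˣ}
    {e : G ≃+ G} (h : twistAut χ * domCongr k k e = 1) : χ = 1 ∧ e = AddEquiv.refl G := by
  have hsingle : ∀ a, e a = a ∧ χ (.ofAdd (e a)) = 1 := by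
    intro a
    have ha := congr($h (single a 1))
    rw [twistAut_mul_domCongr_single, one_mul, AlgEquiv.one_apply] at ha
    obtain ⟨hea, hχ⟩ := (single_inj.1 ha).resolve_right fun h0 => one_ne_zero h0.2
    exact ⟨hea, Units.ext hχ⟩
  refine ⟨MonoidHom.ext fun x => ?_, AddEquiv.ext fun a => (hsingle a).1⟩
  simpa [(hsingle x.toAdd).1] using (hsingle x.toAdd).2

theorem leftInverse_of_map_single [Nontrivial k] {σ τ : k[G] →ₐ[k] k[G]} {f g : G →+ G}
    {χ ψ : Multiplicative G →* kˣ} (hστ : ∀ x, τ (σ x) = x)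
    (hσ : ∀ a r, σ (single a r) = single (f a) (r * χ (.ofAdd a)))
    (hτ : ∀ a r, τ (single a r) = single (g a) (r * ψ (.ofAdd a))) :
    Function.LeftInverse g f := fun a => by
  have h := hστ (single a 1)
  rw [hσ, hτ] at h
  exact ((single_inj.1 h).resolve_right fun h0 => one_ne_zero h0.2).1

end CommSemiring

section Field

variable [Field k] [AddGroup G] [TwoUniqueSums G]

theorem exists_map_single_eq_single (σ : k[G] →ₐ[k] k[G]) :
    ∃ (f : G →+ G) (χ : Multiplicative G →* kˣ), ∀ a r,
      σ (single a r) = single (f a) (r * χ (.ofAdd a)) := by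
  have hunit : ∀ a, ∃ b r, r ≠ 0 ∧ σ (single a 1) = single b r := by
    intro a
    have hmul : σ (single a 1) * σ (single (-a) 1) = 1 := by
      rw [← map_mul, single_mul_single, add_neg_cancel, one_mul, ← one_def, map_one]
    obtain ⟨b, r, hbr⟩ := exists_eq_single_of_mul_eq_one hmul
    refine ⟨b, r, ?_, hbr⟩
    rintro rfl
    rw [hbr, single_zero, zero_mul] at hmul
    exact zero_ne_one hmul
  choose f r hr hfr using hunit
  have hadd : ∀ a a', f (a + a') = f a + f a' ∧ r (a + a') = r a * r a' := by
    intro a a'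
    have h := map_mul σ (single a 1) (single a' 1)
    rw [single_mul_single, one_mul, hfr, hfr, hfr, single_mul_single] at h
    exact (single_inj.1 h).resolve_right fun h0 => hr _ h0.1
  refine ⟨AddMonoidHom.mk' f fun a a' => (hadd a a').1,
    MonoidHom.mk' (fun a => Units.mk0 (r a.toAdd) (hr _)) fun a a' => Units.ext (hadd _ _).2,
    fun a c => ?_⟩
  rw [show single a c = c • single a (1 : k) by rw [smul_single', mul_one], map_smul, hfr,
    smul_single']
  rfl

theorem exists_eq_twistAut_mul_domCongr (σ : k[G] ≃ₐ[k] k[G]) :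
    ∃ (χ : Multiplicative G →* kˣ) (e : G ≃+ G), σ = twistAut χ * domCongr k k e := by
  obtain ⟨f, χ, hf⟩ := exists_map_single_eq_single (σ : k[G] →ₐ[k] k[G])
  obtain ⟨f', χ', hf'⟩ := exists_map_single_eq_single (σ.symm : k[G] →ₐ[k] k[G])
  let e : G ≃+ G :=
    { toFun := f
      invFun := f'
      left_inv := leftInverse_of_map_single σ.symm_apply_apply hf hf'
      right_inv := leftInverse_of_map_single σ.apply_symm_apply hf' hf
      map_add' := f.map_add }
  refine ⟨χ.comp (e.symm : G →+ G).toMultiplicative, e, algEquiv_ext fun a => ?_⟩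
  simpa [e, leftInverse_of_map_single σ.symm_apply_apply hf hf' a] using hf a 1

end Field

end AddMonoidAlgebra

open scoped Matrix

section LatticeCharacters

variable {ι M : Type*} [Fintype ι] [DecidableEq ι] [CommGroup M]

def prodZPowEquiv : (ι → M) ≃* (Multiplicative (ι → ℤ) →* M) where
  toFun c :=
    { toFun m := ∏ i, c i ^ m.toAdd i
      map_one' := by simp
      map_mul' m m' := by simp [_root_.zpow_add, prod_mul_distrib] }
  invFun χ i := χ (.ofAdd (Pi.single i 1))
  left_inv c := by
    funext i
    simp [Pi.single_apply]
  right_inv χ := by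
    ext i
    simp [Pi.single_apply]
  map_mul' c c' := by
    ext m
    simp [mul_zpow, prod_mul_distrib]

@[simp]
theorem prodZPowEquiv_apply (c : ι → M) (m : Multiplicative (ι → ℤ)) :
    prodZPowEquiv c m = ∏ i, c i ^ m.toAdd i := rfl

def Matrix.GeneralLinearGroup.toAddEquiv : GL ι ℤ ≃ ((ι → ℤ) ≃+ (ι → ℤ)) where
  toFun A := (toLin A).toLinearEquiv.toAddEquiv
  invFun e := toLin.symm (.ofLinearEquiv e.toIntLinearEquiv)
  left_inv A := by rw [MulEquiv.symm_apply_eq]; rfl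
  right_inv e := by ext; simp

@[simp]
theorem Matrix.GeneralLinearGroup.toAddEquiv_apply (A : GL ι ℤ) (v : ι → ℤ) :
    toAddEquiv A v = (A : Matrix ι ι ℤ) *ᵥ v := by
  simp [toAddEquiv]

@[simp]
theorem Matrix.GeneralLinearGroup.toAddEquiv_symm_apply (A : GL ι ℤ) (v : ι → ℤ) :
    (toAddEquiv A).symm v = ((A⁻¹ : GL ι ℤ) : Matrix ι ι ℤ) *ᵥ v := by
  rw [AddEquiv.symm_apply_eq, toAddEquiv_apply, Matrix.mulVec_mulVec, ← Units.val_mul,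
    mul_inv_cancel, Units.val_one, Matrix.one_mulVec]

namespace AddMonoidAlgebra

variable (k : Type*) [CommSemiring k]

noncomputable def domCongrGL : GL ι ℤ →* (k[ι → ℤ] ≃ₐ[k] k[ι → ℤ]) where
  toFun A := domCongr k k (Matrix.GeneralLinearGroup.toAddEquiv A)
  map_one' := algEquiv_ext fun a => by simp
  map_mul' A B := algEquiv_ext fun a => by simp [Matrix.mulVec_mulVec]

theorem twistAut_prodZPowEquiv_equivariant {φ : GL ι ℤ →* MulAut (ι → kˣ)}
    (hφ : ∀ A c i, φ A c i = ∏ j, c j ^ ((A⁻¹ : GL ι ℤ) : Matrix ι ι ℤ) j i) (A : GL ι ℤ) :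
    (twistAut.comp prodZPowEquiv.toMonoidHom).comp (φ A).toMonoidHom =
      (MulAut.conj (domCongrGL k A)).toMonoidHom.comp
        (twistAut.comp prodZPowEquiv.toMonoidHom) := by
  ext c : 1
  simp only [MonoidHom.comp_apply, MulEquiv.coe_toMonoidHom, MulAut.conj_apply]
  rw [show domCongrGL k A = domCongr k k (Matrix.GeneralLinearGroup.toAddEquiv A) from rfl,
    ← twistAut_comp_symm]
  congr 1
  ext i
  simp [hφ, Pi.single_apply]

end AddMonoidAlgebra

end LatticeCharacters

open AddMonoidAlgebra Matrix.GeneralLinearGroup in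
theorem stmt_1_general (n : ℕ)
    (φ : GL (Fin n) ℤ →* MulAut (Fin n → ℂˣ))
    (hφ : ∀ (A : GL (Fin n) ℤ) (c : Fin n → ℂˣ) (i : Fin n),
      φ A c i = ∏ j, (c j) ^ (((A⁻¹ : GL (Fin n) ℤ) : Matrix (Fin n) (Fin n) ℤ) j i)) :
    Nonempty
      ((AddMonoidAlgebra ℂ (Fin n → ℤ) ≃ₐ[ℂ] AddMonoidAlgebra ℂ (Fin n → ℤ)) ≃*
        ((Fin n → ℂˣ) ⋊[φ] GL (Fin n) ℤ)) := by
  let Φ := SemidirectProduct.lift _ _ (twistAut_prodZPowEquiv_equivariant ℂ hφ)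
  have hΦ : ∀ x, Φ x = twistAut (prodZPowEquiv x.left) * domCongr ℂ ℂ (toAddEquiv x.right) :=
    fun _ => rfl
  refine ⟨(MulEquiv.ofBijective Φ
    ⟨(injective_iff_map_eq_one Φ).2 fun x hx => ?_, fun σ => ?_⟩).symm⟩
  · obtain ⟨hχ, he⟩ := eq_one_of_twistAut_mul_domCongr_eq_one ((hΦ x).symm.trans hx)
    refine SemidirectProduct.ext (prodZPowEquiv.map_eq_one_iff.1 hχ)
      (toAddEquiv.injective (he.trans ?_))
    ext
    simp
  · obtain ⟨χ, e, rfl⟩ := exists_eq_twistAut_mul_domCongr σ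
    exact ⟨⟨prodZPowEquiv.symm χ, toAddEquiv.symm e⟩, by simp [hΦ]⟩

/-- The group of `ℂ`-algebra automorphisms of the Laurent polynomial algebra
`A_n = AddMonoidAlgebra ℂ (Fin n → ℤ)` (the coordinate ring of `(ℂˣ)ⁿ`, `n = 2g`)
is isomorphic to the semidirect product `(Fin n → ℂˣ) ⋊ GL(n, ℤ)`, where
`A ∈ GL(n, ℤ)` acts on `c : Fin n → ℂˣ` by `(A • c) i = ∏ j, (c j) ^ ((A⁻¹) j i)`. -/
theorem stmt_1 (g : ℕ) (hg : 1 ≤ g) (n : ℕ) (hn : n = 2 * g)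
    (φ : GL (Fin n) ℤ →* MulAut (Fin n → ℂˣ))
    (hφ : ∀ (A : GL (Fin n) ℤ) (c : Fin n → ℂˣ) (i : Fin n),
      φ A c i = ∏ j, (c j) ^ (((A⁻¹ : GL (Fin n) ℤ) : Matrix (Fin n) (Fin n) ℤ) j i)) :
    Nonempty
      ((AddMonoidAlgebra ℂ (Fin n → ℤ) ≃ₐ[ℂ] AddMonoidAlgebra ℂ (Fin n → ℤ)) ≃*
        ((Fin n → ℂˣ) ⋊[φ] GL (Fin n) ℤ)) :=
  stmt_1_general n φ hφ
end

section
/- Let n ≥ 1. For every ℂ-algebra automorphism φ of A_n = AddMonoidAlgebra ℂ (Fin n → ℤ) there exist a unique additive group automorphism σ of (Fin n → ℤ) and a unique group homomorphism χ : Multiplicative (Fin n → ℤ) →* ℂˣ such that φ (Finsupp.single m 1) = (χ m : ℂ) • Finsupp.single (σ m) 1 for every m : Fin n → ℤ. Moreover the assignment φ ↦ σ is a group homomorphism from the group of ℂ-algebra automorphisms of A_n to the group of additive automorphisms of (Fin n → ℤ). -/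
/-!
Units of `R[A]`, for a domain `R` and a group `A` with the two-unique-sums property (such as `ℤⁿ`),
are the trivial units `c • Xᵃ`. An algebra automorphism `φ` preserves units, so
`φ (Xᵐ) = χ m • X^(σ m)`, and the exponent and coefficient of such a monomial are unique.
Comparing both sides of `φ (X^(m + m')) = φ (Xᵐ) * φ (X^m')` shows that `σ` is additive and `χ`
multiplicative, and comparing `(φ * ψ) (Xᵐ) = φ (ψ (Xᵐ))` shows `σ_(φ * ψ) = σ_φ ∘ σ_ψ`; in
particular `σ_φ` is invertible with inverse `σ_(φ⁻¹)`.
-/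

open AddMonoidAlgebra

namespace AddMonoidAlgebra

variable {R A : Type*}

section Semiring

variable [Semiring R]

theorem single_units_inj [Nontrivial R] {a a' : A} {c c' : Rˣ} :
    single a (c : R) = single a' (c' : R) ↔ a = a' ∧ c = c' := by
  rw [single_inj, Units.val_inj]
  simp [c.ne_zero]

/-- Two distinct pairs with unique sums would give two distinct monomials in `f * g = 1`. -/
theorem card_support_mul_card_support_le_one_of_mul_eq_one [NoZeroDivisors R] [AddZeroClass A]
    [TwoUniqueSums A] {f g : R[A]} (h : f * g = 1) :
    f.coeff.support.card * g.coeff.support.card ≤ 1 := by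
  by_contra! hlt
  obtain ⟨p, hp, q, hq, hne, hup, huq⟩ := TwoUniqueSums.uniqueAdd_of_one_lt_card hlt
  have sum_eq_zero : ∀ x ∈ f.coeff.support ×ˢ g.coeff.support,
      UniqueAdd f.coeff.support g.coeff.support x.1 x.2 → x.1 + x.2 = 0 := by
    intro x hx hux
    rw [Finset.mem_product, Finsupp.mem_support_iff, Finsupp.mem_support_iff] at hx
    have hcoeff := coeff_mul_add_of_uniqueAdd hux
    rw [h, one_def, coeff_single] at hcoeff
    have hmem : x.1 + x.2 ∈ (Finsupp.single (0 : A) (1 : R)).support :=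
      Finsupp.mem_support_iff.2 (hcoeff ▸ mul_ne_zero hx.1 hx.2)
    exact Finset.mem_singleton.1 (Finsupp.support_single_subset hmem)
  obtain ⟨hq₁, hq₂⟩ := Finset.mem_product.1 hq
  have hqp := hup hq₁ hq₂ ((sum_eq_zero q hq huq).trans (sum_eq_zero p hp hup).symm)
  exact hne (Prod.ext hqp.1 hqp.2).symm

theorem exists_eq_single_of_mul_eq_one_s4 [NoZeroDivisors R] [AddZeroClass A] [TwoUniqueSums A]
    {f g : R[A]} (h : f * g = 1) : ∃ a r, f = single a r := by
  rcases eq_or_ne g 0 with rfl | hg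
  · refine ⟨0, 0, ?_⟩
    have : Subsingleton R[A] := subsingleton_of_zero_eq_one (by simpa using h)
    exact Subsingleton.elim _ _
  have hg : 0 < g.coeff.support.card := by
    simpa [Finset.card_pos, Finsupp.support_nonempty_iff] using hg
  have hf : f.coeff.support.card ≤ 1 :=
    Nat.le_of_mul_le_mul_right
      ((card_support_mul_card_support_le_one_of_mul_eq_one h).trans (by rw [one_mul]; exact hg)) hg
  obtain ⟨a, ha⟩ := Finsupp.card_support_le_one.1 hf
  exact ⟨a, f.coeff a, ext (by rw [coeff_single]; exact ha)⟩

theorem exists_eq_single_of_isUnit [NoZeroDivisors R] [Nontrivial R] [AddMonoid A]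
    [TwoUniqueSums A] {f : R[A]} (hf : IsUnit f) : ∃ (a : A) (c : Rˣ), f = single a (c : R) := by
  obtain ⟨u, rfl⟩ := hf
  obtain ⟨a, r, hr⟩ := exists_eq_single_of_mul_eq_one_s4 u.mul_inv
  obtain ⟨b, s, hs⟩ := exists_eq_single_of_mul_eq_one_s4 u.inv_mul
  have hrs := u.mul_inv
  have hsr := u.inv_mul
  rw [hr, hs, single_mul_single, one_def, single_inj] at hrs hsr
  simp only [one_ne_zero, and_false, or_false] at hrs hsr
  exact ⟨a, ⟨r, s, hrs.2, hsr.2⟩, hr⟩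

theorem isUnit_single_one [AddGroup A] (m : A) : IsUnit (single m (1 : R)) := by
  simpa using (Group.isUnit (Multiplicative.ofAdd m)).map (of R A)

end Semiring

section Automorphism

variable [CommSemiring R] [NoZeroDivisors R] [Nontrivial R] [AddGroup A] [TwoUniqueSums A]
  (φ ψ : R[A] ≃ₐ[R] R[A])

theorem exists_map_single_one_eq (m : A) :
    ∃ (a : A) (c : Rˣ), φ (single m 1) = single a (c : R) :=
  exists_eq_single_of_isUnit ((isUnit_single_one m).map φ)

noncomputable def monomialExponent (m : A) : A :=
  (exists_map_single_one_eq φ m).choose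

noncomputable def monomialCoeff (m : A) : Rˣ :=
  (exists_map_single_one_eq φ m).choose_spec.choose

theorem map_single_one (m : A) :
    φ (single m 1) = single (monomialExponent φ m) (monomialCoeff φ m : R) :=
  (exists_map_single_one_eq φ m).choose_spec.choose_spec

variable {φ} in
theorem eq_monomialExponent_and_eq_monomialCoeff {m a : A} {c : Rˣ}
    (h : φ (single m 1) = single a (c : R)) :
    a = monomialExponent φ m ∧ c = monomialCoeff φ m :=
  single_units_inj.1 (h.symm.trans (map_single_one φ m))

theorem map_single_one_add (m m' : A) :
    φ (single (m + m') 1) = single (monomialExponent φ m + monomialExponent φ m')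
      ((monomialCoeff φ m * monomialCoeff φ m' : Rˣ) : R) := by
  rw [← one_mul (1 : R), ← single_mul_single, map_mul, map_single_one, map_single_one,
    single_mul_single, Units.val_mul]

theorem monomialExponent_add (m m' : A) :
    monomialExponent φ (m + m') = monomialExponent φ m + monomialExponent φ m' :=
  (eq_monomialExponent_and_eq_monomialCoeff (map_single_one_add φ m m')).1.symm

theorem monomialCoeff_add (m m' : A) :
    monomialCoeff φ (m + m') = monomialCoeff φ m * monomialCoeff φ m' :=
  (eq_monomialExponent_and_eq_monomialCoeff (map_single_one_add φ m m')).2.symm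

theorem monomialExponent_one (m : A) : monomialExponent (1 : R[A] ≃ₐ[R] R[A]) m = m :=
  (eq_monomialExponent_and_eq_monomialCoeff (by rw [AlgEquiv.one_apply, Units.val_one])).1.symm

theorem monomialExponent_mul (m : A) :
    monomialExponent (φ * ψ) m = monomialExponent φ (monomialExponent ψ m) := by
  have h : (φ * ψ) (single m 1) = single (monomialExponent φ (monomialExponent ψ m))
      ((monomialCoeff ψ m * monomialCoeff φ (monomialExponent ψ m) : Rˣ) : R) := by
    rw [AlgEquiv.mul_apply, map_single_one ψ, ← mul_one (monomialCoeff ψ m : R),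
      ← smul_single', map_smul, map_single_one, smul_single', Units.val_mul]
  exact (eq_monomialExponent_and_eq_monomialCoeff h).1.symm

theorem monomialExponent_symm_apply (m : A) :
    monomialExponent φ.symm (monomialExponent φ m) = m := by
  rw [← monomialExponent_mul, ← AlgEquiv.aut_inv, inv_mul_cancel, monomialExponent_one]

noncomputable def monomialExponentAut : AddAut A where
  toFun := monomialExponent φ
  invFun := monomialExponent φ.symm
  left_inv := monomialExponent_symm_apply φ
  right_inv m := by simpa using monomialExponent_symm_apply φ.symm m
  map_add' := monomialExponent_add φ

noncomputable def monomialCoeffHom : Multiplicative A →* Rˣ :=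
  MonoidHom.mk' (fun m ↦ monomialCoeff φ m.toAdd) fun m m' ↦ monomialCoeff_add φ m.toAdd m'.toAdd

variable (R A) in
noncomputable def monomialExponentHom : (R[A] ≃ₐ[R] R[A]) →* Multiplicative (AddAut A) where
  toFun φ := .ofAdd (monomialExponentAut φ)
  map_one' := congrArg Multiplicative.ofAdd (AddEquiv.ext monomialExponent_one)
  map_mul' φ ψ := congrArg Multiplicative.ofAdd (AddEquiv.ext (monomialExponent_mul φ ψ))

end Automorphism

end AddMonoidAlgebra

theorem stmt_4_general (n : ℕ) :
    (∀ φ : AddMonoidAlgebra ℂ (Fin n → ℤ) ≃ₐ[ℂ] AddMonoidAlgebra ℂ (Fin n → ℤ),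
      ∃! p : AddAut (Fin n → ℤ) × (Multiplicative (Fin n → ℤ) →* ℂˣ),
        ∀ m : Fin n → ℤ,
          φ (AddMonoidAlgebra.single m 1 : AddMonoidAlgebra ℂ (Fin n → ℤ)) =
            ((p.2 (Multiplicative.ofAdd m) : ℂ)) •
              (AddMonoidAlgebra.single (p.1 m) 1 : AddMonoidAlgebra ℂ (Fin n → ℤ))) ∧
    ∃ f : (AddMonoidAlgebra ℂ (Fin n → ℤ) ≃ₐ[ℂ] AddMonoidAlgebra ℂ (Fin n → ℤ)) →*
        Multiplicative (AddAut (Fin n → ℤ)),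
      ∀ (φ : AddMonoidAlgebra ℂ (Fin n → ℤ) ≃ₐ[ℂ] AddMonoidAlgebra ℂ (Fin n → ℤ))
        (m : Fin n → ℤ), ∃ c : ℂˣ,
          φ (AddMonoidAlgebra.single m 1 : AddMonoidAlgebra ℂ (Fin n → ℤ)) =
            (c : ℂ) • (AddMonoidAlgebra.single (Multiplicative.toAdd (f φ) m) 1 : AddMonoidAlgebra ℂ (Fin n → ℤ)) := by
  have map_single_one_eq_smul (φ : ℂ[Fin n → ℤ] ≃ₐ[ℂ] ℂ[Fin n → ℤ]) (m : Fin n → ℤ) :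
      φ (single m 1) = (monomialCoeff φ m : ℂ) • single (monomialExponent φ m) 1 := by
    rw [smul_single', mul_one, map_single_one]
  refine ⟨fun φ ↦ ⟨(monomialExponentAut φ, monomialCoeffHom φ), map_single_one_eq_smul φ, ?_⟩,
    monomialExponentHom ℂ _, fun φ m ↦ ⟨monomialCoeff φ m, map_single_one_eq_smul φ m⟩⟩
  rintro ⟨σ, χ⟩ hp
  have hσχ (m : Fin n → ℤ) := eq_monomialExponent_and_eq_monomialCoeff (by
    rw [hp m, smul_single', mul_one] : φ (single m 1) = single (σ m) (χ (.ofAdd m) : ℂ))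
  exact Prod.ext (AddEquiv.ext fun m ↦ (hσχ m).1) (MonoidHom.ext fun m ↦ (hσχ m.toAdd).2)

/-- Every `ℂ`-algebra automorphism `φ` of `A_n = AddMonoidAlgebra ℂ (Fin n → ℤ)` sends each
monomial `Xᵐ` to `(χ m) • X^{σ m}` for a unique additive automorphism `σ` of `ℤⁿ` and a unique
character `χ : ℤⁿ → ℂˣ`; moreover `φ ↦ σ` is a group homomorphism. -/
theorem stmt_4 (n : ℕ) (hn : 1 ≤ n) :
    (∀ φ : AddMonoidAlgebra ℂ (Fin n → ℤ) ≃ₐ[ℂ] AddMonoidAlgebra ℂ (Fin n → ℤ),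
      ∃! p : AddAut (Fin n → ℤ) × (Multiplicative (Fin n → ℤ) →* ℂˣ),
        ∀ m : Fin n → ℤ,
          φ (AddMonoidAlgebra.single m 1 : AddMonoidAlgebra ℂ (Fin n → ℤ)) =
            ((p.2 (Multiplicative.ofAdd m) : ℂ)) •
              (AddMonoidAlgebra.single (p.1 m) 1 : AddMonoidAlgebra ℂ (Fin n → ℤ))) ∧
    ∃ f : (AddMonoidAlgebra ℂ (Fin n → ℤ) ≃ₐ[ℂ] AddMonoidAlgebra ℂ (Fin n → ℤ)) →*
        Multiplicative (AddAut (Fin n → ℤ)),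
      ∀ (φ : AddMonoidAlgebra ℂ (Fin n → ℤ) ≃ₐ[ℂ] AddMonoidAlgebra ℂ (Fin n → ℤ))
        (m : Fin n → ℤ), ∃ c : ℂˣ,
          φ (AddMonoidAlgebra.single m 1 : AddMonoidAlgebra ℂ (Fin n → ℤ)) =
            (c : ℂ) • (AddMonoidAlgebra.single (Multiplicative.toAdd (f φ) m) 1 : AddMonoidAlgebra ℂ (Fin n → ℤ)) :=
  stmt_4_general n
end
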